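/- arXiv:2410.04273 — 2 statements merged into one kernel-verified Lean document; each statement's English description precedes it below -/
import Mathlib

section
/- Let ℂ be a constant totally symmetric fourth-order tensor, u, w be C² vector fields solving div(ℂ∇u) = 0 and div(ℂ∇w) = 0 on Ω\Γ, and 𝒰 a C¹ vector field. Define b = ((𝒰·∇)w)ᵀ ℂ[∇u] + ((𝒰·∇)u)ᵀ ℂ[∇w] − (ℂ[∇u] : ∇w) 𝒰. Then pointwise in Ω\Γ: div b = ℂ[∇u] : (∇w D𝒰) + ℂ[∇u D𝒰] : ∇w − (div 𝒰)(ℂ[∇u] : ∇w). -/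
/-- Partial derivative `∂_j f` of a scalar field on `ℝ^d`. -/
noncomputable def pd {d : ℕ} (f : (Fin d → ℝ) → ℝ) (j : Fin d) (x : Fin d → ℝ) : ℝ :=
  fderiv ℝ f x (Pi.single j 1)

/-- Gradient matrix of a vector field: `(∇v)^i_j = ∂_j v^i`. -/
noncomputable def gradM {d : ℕ} (v : (Fin d → ℝ) → Fin d → ℝ) (x : Fin d → ℝ) :
    Fin d → Fin d → ℝ :=
  fun i j => pd (fun y => v y i) j x

/-- Action of a fourth-order tensor on a matrix. -/
noncomputable def tApply {d : ℕ} (C : Fin d → Fin d → Fin d → Fin d → ℝ)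
    (A : Fin d → Fin d → ℝ) : Fin d → Fin d → ℝ :=
  fun a b => ∑ c, ∑ e, C a b c e * A c e

/-- Frobenius inner product of matrices. -/
def mdot {d : ℕ} (A B : Fin d → Fin d → ℝ) : ℝ := ∑ a, ∑ b, A a b * B a b

/-! Write `S = ℂ[∇u]`. Since `div S = 0`, the divergence of `((𝒰·∇)w)ᵀ S` is
`S : ∇((𝒰·∇)w)`, and by symmetry of second derivatives `∇((𝒰·∇)w) = ∇w D𝒰 + (𝒰·∇)∇w`;
likewise with `u` and `w` exchanged. The divergence of `(S : ∇w) 𝒰` is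
`(𝒰·∇)(S : ∇w) + (div 𝒰)(S : ∇w)`, and thanks to the major symmetry `ℂ_{abce} = ℂ_{ceab}` its
convective part `ℂ[(𝒰·∇)∇u] : ∇w + ℂ[∇u] : (𝒰·∇)∇w` cancels the `(𝒰·∇)∇` terms of the first two
summands. A convective derivative `(v·∇)f` at `x` is written `fderiv ℝ f x v`. -/

open Finset

lemma mdot_tApply_comm {d : ℕ} {C : Fin d → Fin d → Fin d → Fin d → ℝ}
    (hC : ∀ a b c e, C a b c e = C c e a b) (A B : Fin d → Fin d → ℝ) :
    mdot (tApply C A) B = mdot (tApply C B) A := by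
  simp only [mdot, tApply, ← Fintype.sum_prod_type']
  simp only [sum_mul]
  rw [sum_comm]
  refine sum_congr rfl fun p _ => sum_congr rfl fun q _ => ?_
  rw [hC]
  ring

section Directional

variable {E : Type*} [NormedAddCommGroup E] [NormedSpace ℝ E] {d : ℕ} {x : E}

lemma fderiv_tApply_apply (C : Fin d → Fin d → Fin d → Fin d → ℝ) {A : E → Fin d → Fin d → ℝ}
    (hA : ∀ c e, DifferentiableAt ℝ (fun y => A y c e) x) (v : E) (a b : Fin d) :
    fderiv ℝ (fun y => tApply C (A y) a b) x v
      = tApply C (fun c e => fderiv ℝ (fun y => A y c e) x v) a b := by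
  simp (disch := intros; fun_prop) only [tApply, fderiv_fun_sum, fderiv_const_mul,
    FunLike.coe_sum, Finset.sum_apply, smul_apply, smul_eq_mul]

lemma fderiv_mdot_apply {A B : E → Fin d → Fin d → ℝ}
    (hA : ∀ a b, DifferentiableAt ℝ (fun y => A y a b) x)
    (hB : ∀ a b, DifferentiableAt ℝ (fun y => B y a b) x) (v : E) :
    fderiv ℝ (fun y => mdot (A y) (B y)) x v
      = mdot (fun a b => fderiv ℝ (fun y => A y a b) x v) (B x)
        + mdot (A x) (fun a b => fderiv ℝ (fun y => B y a b) x v) := by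
  simp (disch := intros; fun_prop) only [mdot, fderiv_fun_sum, fderiv_fun_mul,
    FunLike.coe_sum, Finset.sum_apply, add_apply, smul_apply, smul_eq_mul, sum_add_distrib]
  rw [add_comm]
  congr 1
  exact sum_congr rfl fun a _ => sum_congr rfl fun b _ => mul_comm _ _

end Directional

section Partial

variable {d : ℕ} {x : Fin d → ℝ}

lemma pd_add {f g : (Fin d → ℝ) → ℝ} (hf : DifferentiableAt ℝ f x)
    (hg : DifferentiableAt ℝ g x) (j : Fin d) :
    pd (fun y => f y + g y) j x = pd f j x + pd g j x := by
  simp [pd, fderiv_fun_add hf hg]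

lemma pd_sub {f g : (Fin d → ℝ) → ℝ} (hf : DifferentiableAt ℝ f x)
    (hg : DifferentiableAt ℝ g x) (j : Fin d) :
    pd (fun y => f y - g y) j x = pd f j x - pd g j x := by
  simp [pd, fderiv_fun_sub hf hg]

lemma pd_mul {f g : (Fin d → ℝ) → ℝ} (hf : DifferentiableAt ℝ f x)
    (hg : DifferentiableAt ℝ g x) (j : Fin d) :
    pd (fun y => f y * g y) j x = pd f j x * g x + f x * pd g j x := by
  simp [pd, fderiv_fun_mul hf hg]
  ring

lemma pd_sum {ι : Type*} {t : Finset ι} {f : ι → (Fin d → ℝ) → ℝ}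
    (hf : ∀ i ∈ t, DifferentiableAt ℝ (f i) x) (j : Fin d) :
    pd (fun y => ∑ i ∈ t, f i y) j x = ∑ i ∈ t, pd (f i) j x := by
  simp [pd, fderiv_fun_sum hf]

lemma sum_mul_pd (f : (Fin d → ℝ) → ℝ) (v : Fin d → ℝ) :
    ∑ l, v l * pd f l x = fderiv ℝ f x v := by
  conv_rhs => rw [pi_eq_sum_univ' v]
  simp [pd, map_sum]

lemma differentiableAt_pd {f : (Fin d → ℝ) → ℝ} (hf : ContDiffAt ℝ 2 f x) (i : Fin d) :
    DifferentiableAt ℝ (pd f i) x :=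
  ((hf.fderiv_right (m := 1) le_rfl).differentiableAt one_ne_zero).clm_apply
    (differentiableAt_const _)

lemma differentiableAt_gradM {v : (Fin d → ℝ) → Fin d → ℝ} (hv : ContDiffAt ℝ 2 v x)
    (i l : Fin d) : DifferentiableAt ℝ (fun y => gradM v y i l) x :=
  differentiableAt_pd (contDiffAt_pi.1 hv i) l

lemma pd_pd_comm {f : (Fin d → ℝ) → ℝ} (hf : ContDiffAt ℝ 2 f x) (i j : Fin d) :
    pd (pd f i) j x = pd (pd f j) i x := by
  have hd : DifferentiableAt ℝ (fderiv ℝ f) x :=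
    (hf.fderiv_right (m := 1) le_rfl).differentiableAt one_ne_zero
  unfold pd
  simp only [fderiv_clm_apply hd (differentiableAt_const _)]
  simpa using hf.isSymmSndFDerivAt (by simp) _ _

lemma sum_pd_add_sub {f g h : (Fin d → ℝ) → Fin d → ℝ}
    (hf : ∀ j, DifferentiableAt ℝ (fun y => f y j) x)
    (hg : ∀ j, DifferentiableAt ℝ (fun y => g y j) x)
    (hh : ∀ j, DifferentiableAt ℝ (fun y => h y j) x) :
    ∑ j, pd (fun y => f y j + g y j - h y j) j x
      = ∑ j, pd (fun y => f y j) j x + ∑ j, pd (fun y => g y j) j x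
        - ∑ j, pd (fun y => h y j) j x := by
  simp only [pd_sub ((hf _).fun_add (hg _)) (hh _), pd_add (hf _) (hg _), sum_add_distrib,
    sum_sub_distrib]

lemma sum_pd_sum_mul {P : (Fin d → ℝ) → Fin d → ℝ} {S : (Fin d → ℝ) → Fin d → Fin d → ℝ}
    (hP : ∀ i, DifferentiableAt ℝ (fun y => P y i) x)
    (hS : ∀ i j, DifferentiableAt ℝ (fun y => S y i j) x) :
    ∑ j, pd (fun y => ∑ i, P y i * S y i j) j x
      = mdot (S x) (fun i j => pd (fun y => P y i) j x)
        + ∑ i, P x i * ∑ j, pd (fun y => S y i j) j x := by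
  simp only [pd_sum fun i _ => (hP i).fun_mul (hS i _), pd_mul (hP _) (hS _ _), sum_add_distrib,
    mdot, mul_sum]
  rw [sum_comm]
  congr 1
  · exact sum_congr rfl fun i _ => sum_congr rfl fun j _ => mul_comm _ (S x i j)
  · exact sum_comm

lemma sum_pd_mul_vec {m : (Fin d → ℝ) → ℝ} {V : (Fin d → ℝ) → Fin d → ℝ}
    (hm : DifferentiableAt ℝ m x) (hV : ∀ j, DifferentiableAt ℝ (fun y => V y j) x) :
    ∑ j, pd (fun y => m y * V y j) j x = fderiv ℝ m x (V x) + m x * ∑ j, gradM V x j j := by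
  simp only [pd_mul hm (hV _), sum_add_distrib, ← mul_sum, ← sum_mul_pd, gradM]
  simp only [mul_comm]

lemma pd_sum_mul_gradM {U v : (Fin d → ℝ) → Fin d → ℝ}
    (hU : ∀ l, DifferentiableAt ℝ (fun y => U y l) x) (hv : ContDiffAt ℝ 2 v x) (i j : Fin d) :
    pd (fun y => ∑ l, U y l * gradM v y i l) j x
      = ∑ l, gradM v x i l * gradM U x l j + fderiv ℝ (fun y => gradM v y i j) x (U x) := by
  have hgrad := differentiableAt_gradM hv i
  rw [pd_sum fun l _ => (hU l).fun_mul (hgrad l), ← sum_mul_pd]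
  simp only [pd_mul (hU _) (hgrad _), sum_add_distrib]
  congr 1
  · exact sum_congr rfl fun l _ => mul_comm _ _
  · exact sum_congr rfl fun l _ => congrArg _ (pd_pd_comm (contDiffAt_pi.1 hv i) l j)

lemma sum_pd_convective_flux {U v : (Fin d → ℝ) → Fin d → ℝ}
    {S : (Fin d → ℝ) → Fin d → Fin d → ℝ}
    (hU : ∀ l, DifferentiableAt ℝ (fun y => U y l) x) (hv : ContDiffAt ℝ 2 v x)
    (hS : ∀ i j, DifferentiableAt ℝ (fun y => S y i j) x)
    (hdiv : ∀ i, ∑ j, pd (fun y => S y i j) j x = 0) :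
    ∑ j, pd (fun y => ∑ i, (∑ l, U y l * gradM v y i l) * S y i j) j x
      = mdot (S x) (fun i j => ∑ l, gradM v x i l * gradM U x l j)
        + mdot (S x) (fun i j => fderiv ℝ (fun y => gradM v y i j) x (U x)) := by
  have hgrad := differentiableAt_gradM hv
  rw [sum_pd_sum_mul (fun i => by fun_prop) hS]
  simp only [hdiv, mul_zero, sum_const_zero, add_zero, pd_sum_mul_gradM hU hv, mdot, mul_add,
    sum_add_distrib]

end Partial

theorem stmt_12_general {d : ℕ} (s : Set (Fin d → ℝ)) (hs : IsOpen s)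
    (C : Fin d → Fin d → Fin d → Fin d → ℝ)
    (hsym2 : ∀ a b c e, C a b c e = C c e a b)
    (u w U : (Fin d → ℝ) → Fin d → ℝ)
    (hu : ContDiffOn ℝ 2 u s) (hw : ContDiffOn ℝ 2 w s) (hU : ContDiffOn ℝ 1 U s)
    (hdivu : ∀ x ∈ s, ∀ i, ∑ j, pd (fun y => tApply C (gradM u y) i j) j x = 0)
    (hdivw : ∀ x ∈ s, ∀ i, ∑ j, pd (fun y => tApply C (gradM w y) i j) j x = 0) :
    ∀ x ∈ s,
      ∑ j, pd (fun y =>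
          (∑ i, (∑ l, U y l * gradM w y i l) * tApply C (gradM u y) i j)
          + (∑ i, (∑ l, U y l * gradM u y i l) * tApply C (gradM w y) i j)
          - mdot (tApply C (gradM u y)) (gradM w y) * U y j) j x
        = mdot (tApply C (gradM u x)) (fun i j => ∑ l, gradM w x i l * gradM U x l j)
          + mdot (tApply C (fun i j => ∑ l, gradM u x i l * gradM U x l j)) (gradM w x)
          - (∑ j, gradM U x j j) * mdot (tApply C (gradM u x)) (gradM w x) := by
  intro x hx
  have hux : ContDiffAt ℝ 2 u x := hu.contDiffAt (hs.mem_nhds hx)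
  have hwx : ContDiffAt ℝ 2 w x := hw.contDiffAt (hs.mem_nhds hx)
  have hUx : ∀ l, DifferentiableAt ℝ (fun y => U y l) x := fun l =>
    (contDiffAt_pi.1 (hU.contDiffAt (hs.mem_nhds hx)) l).differentiableAt one_ne_zero
  have hgu := differentiableAt_gradM hux
  have hgw := differentiableAt_gradM hwx
  have hSu : ∀ i j, DifferentiableAt ℝ (fun y => tApply C (gradM u y) i j) x := by
    unfold tApply; fun_prop
  have hSw : ∀ i j, DifferentiableAt ℝ (fun y => tApply C (gradM w y) i j) x := by
    unfold tApply; fun_prop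
  have hm : DifferentiableAt ℝ (fun y => mdot (tApply C (gradM u y)) (gradM w y)) x := by
    unfold mdot; fun_prop
  rw [sum_pd_add_sub (fun _ => by fun_prop) (fun _ => by fun_prop) (fun _ => by fun_prop),
    sum_pd_convective_flux hUx hwx hSu (hdivu x hx),
    sum_pd_convective_flux hUx hux hSw (hdivw x hx), sum_pd_mul_vec hm hUx,
    fderiv_mdot_apply hSu hgw]
  simp only [fderiv_tApply_apply C hgu]
  rw [mdot_tApply_comm hsym2 (gradM w x), mdot_tApply_comm hsym2 (gradM w x)]
  ring

/-- Let `ℂ` be a constant totally symmetric fourth-order tensor, `u, w`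
be `C²` vector fields with `div(ℂ∇u) = div(ℂ∇w) = 0` on the open set `s = Ω\Γ`, and `𝒰`
a `C¹` vector field. With
`b = ((𝒰·∇)w)ᵀ ℂ[∇u] + ((𝒰·∇)u)ᵀ ℂ[∇w] − (ℂ[∇u] : ∇w) 𝒰`, one has pointwise on `s`:
`div b = ℂ[∇u] : (∇w D𝒰) + ℂ[∇u D𝒰] : ∇w − (div 𝒰)(ℂ[∇u] : ∇w)`. -/
theorem stmt_12 {d : ℕ} (s : Set (Fin d → ℝ)) (hs : IsOpen s)
    (C : Fin d → Fin d → Fin d → Fin d → ℝ)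
    (hsym1 : ∀ a b c e, C a b c e = C b a c e)
    (hsym2 : ∀ a b c e, C a b c e = C c e a b)
    (u w U : (Fin d → ℝ) → Fin d → ℝ)
    (hu : ContDiffOn ℝ 2 u s) (hw : ContDiffOn ℝ 2 w s) (hU : ContDiffOn ℝ 1 U s)
    (hdivu : ∀ x ∈ s, ∀ i, ∑ j, pd (fun y => tApply C (gradM u y) i j) j x = 0)
    (hdivw : ∀ x ∈ s, ∀ i, ∑ j, pd (fun y => tApply C (gradM w y) i j) j x = 0) :
    ∀ x ∈ s,
      ∑ j, pd (fun y =>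
          (∑ i, (∑ l, U y l * gradM w y i l) * tApply C (gradM u y) i j)
          + (∑ i, (∑ l, U y l * gradM u y i l) * tApply C (gradM w y) i j)
          - mdot (tApply C (gradM u y)) (gradM w y) * U y j) j x
        = mdot (tApply C (gradM u x)) (fun i j => ∑ l, gradM w x i l * gradM U x l j)
          + mdot (tApply C (fun i j => ∑ l, gradM u x i l * gradM U x l j)) (gradM w x)
          - (∑ j, gradM U x j j) * mdot (tApply C (gradM u x)) (gradM w x) :=
  stmt_12_general s hs C hsym2 u w U hu hw hU hdivu hdivw
end

section
/- Let Γ be a closed Lipschitz surface splitting a bounded Lipschitz domain Ω into Ω⁺ and Ω⁻, and let S ⊂ Γ be an open Lipschitz subsurface. Then H¹(Ω\S̄; ℝ^d) is isomorphic (as a Banach space with equivalent norm) to the space H̃ = { f ∈ L²(Ω;ℝ^d) : f|_{Ω⁺} ∈ H¹(Ω⁺), f|_{Ω⁻} ∈ H¹(Ω⁻), and [f]_{Γ\S̄} = 0 }, where [f] denotes the jump of traces across Γ. -/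
open MeasureTheory
open Set Function

/-- A set has Lipschitz (graph) boundary: near every boundary point the set is, in some
coordinate direction, the subgraph of a Lipschitz function. -/
def LipschitzGraphBoundary {d : ℕ} (A : Set (Fin d → ℝ)) : Prop :=
  ∀ x ∈ frontier A, ∃ (i : Fin d) (r : ℝ), 0 < r ∧
    ∃ (L : NNReal) (φ : (Fin d → ℝ) → ℝ), LipschitzWith L φ ∧
      ∀ y ∈ Metric.ball x r, (y ∈ A ↔ y i < φ (Function.update y i 0))

/-- `G` is the (weak, distributional) gradient matrix of the vector field `f` on the
open set `Uo`: for all smooth compactly supported test functions in `Uo`,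
`∫ f^i ∂_j φ = -∫ G^i_j φ`. -/
def IsWeakGrad {d : ℕ} (Uo : Set (Fin d → ℝ)) (f : (Fin d → ℝ) → Fin d → ℝ)
    (G : (Fin d → ℝ) → Fin d → Fin d → ℝ) : Prop :=
  ∀ φ : (Fin d → ℝ) → ℝ, ContDiff ℝ (⊤ : ℕ∞) φ → HasCompactSupport φ → tsupport φ ⊆ Uo →
    ∀ i j, ∫ x in Uo, f x i * pd φ j x = - ∫ x in Uo, G x i j * φ x

/-- `f ∈ H¹(Uo; ℝ^d)`: `f ∈ L²(Uo)` and `f` has a weak gradient in `L²(Uo)`. -/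
def MemH1 {d : ℕ} (Uo : Set (Fin d → ℝ)) (f : (Fin d → ℝ) → Fin d → ℝ) : Prop :=
  (∀ i, MemLp (fun x => f x i) 2 (volume.restrict Uo)) ∧
  ∃ G : (Fin d → ℝ) → Fin d → Fin d → ℝ,
    (∀ i j, MemLp (fun x => G x i j) 2 (volume.restrict Uo)) ∧ IsWeakGrad Uo f G


lemma graph_null {d : ℕ} (i : Fin d) (φ : (Fin d → ℝ) → ℝ) (hφ : Continuous φ)
    (x : Fin d → ℝ) (r : ℝ) :
    volume {y | y ∈ Metric.ball x r ∧ y i = φ (Function.update y i 0)} = 0 := by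
  classical
  set G : Set (Fin d → ℝ) := {y | y ∈ Metric.ball x r ∧ y i = φ (Function.update y i 0)} with hG
  have hcont : Continuous fun y : Fin d → ℝ => φ (Function.update y i 0) :=
    hφ.comp (continuous_id.update i continuous_const)
  have hGm : MeasurableSet G := by
    apply MeasurableSet.inter Metric.isOpen_ball.measurableSet
    exact measurableSet_eq_fun (measurable_pi_apply i) hcont.measurable
  set c : ℕ → ℝ := fun n => 1 / (n + 1) with hc
  have hcpos : ∀ n, 0 < c n := fun n => by positivity
  have hcle : ∀ n, c n ≤ 1 := fun n => by
    rw [hc]; rw [div_le_one (by positivity)]; push_cast; linarith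
  have hcinj : Function.Injective c := by
    intro a b hab
    have h1 : ((a:ℝ)+1)⁻¹ = ((b:ℝ)+1)⁻¹ := by simpa [hc, one_div] using hab
    have h2 : ((a:ℝ)+1) = ((b:ℝ)+1) := inv_injective h1
    exact_mod_cast (by linarith : (a:ℝ) = b)
  set v : ℕ → (Fin d → ℝ) := fun n => c n • (Pi.single i 1 : Fin d → ℝ) with hv
  set s : ℕ → Set (Fin d → ℝ) := fun n => (fun y => -v n + y) ⁻¹' G with hs
  have hμs : ∀ n, volume (s n) = volume G := fun n => measure_preimage_add _ _ _
  have hupd : ∀ (n : ℕ) (y : Fin d → ℝ),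
      Function.update (-v n + y) i 0 = Function.update y i 0 := by
    intro n y
    funext k
    by_cases hk : k = i
    · subst hk; simp
    · simp only [Function.update_of_ne hk, hv, Pi.add_apply, Pi.neg_apply, Pi.smul_apply,
        Pi.single_eq_of_ne hk, smul_zero, neg_zero, zero_add]
  have hdisj : Pairwise (Function.onFun Disjoint s) := by
    intro a b hab
    refine Set.disjoint_left.mpr fun y hya hyb => hab ?_
    have ha : (-v a + y) i = φ (Function.update y i 0) := by
      have := hya.2; rwa [hupd] at this
    have hb : (-v b + y) i = φ (Function.update y i 0) := by
      have := hyb.2; rwa [hupd] at this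
    have hva : (-v a + y) i = y i - c a := by
      simp only [hv, Pi.add_apply, Pi.neg_apply, Pi.smul_apply, Pi.single_eq_same,
        smul_eq_mul, mul_one]; ring
    have hvb : (-v b + y) i = y i - c b := by
      simp only [hv, Pi.add_apply, Pi.neg_apply, Pi.smul_apply, Pi.single_eq_same,
        smul_eq_mul, mul_one]; ring
    apply hcinj
    rw [hva] at ha; rw [hvb] at hb; linarith
  have hsub : ∀ n, s n ⊆ Metric.ball x (r + 1) := by
    intro n y hy
    have h1 : -v n + y ∈ Metric.ball x r := hy.1
    have hnv : ‖v n‖ ≤ 1 := by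
      rw [hv]
      simp only [norm_smul, Pi.norm_single, norm_one, mul_one]
      rw [Real.norm_eq_abs, abs_of_pos (hcpos n)]; exact hcle n
    have : dist y x ≤ dist y (-v n + y) + dist (-v n + y) x := dist_triangle _ _ _
    have h2 : dist y (-v n + y) = ‖v n‖ := by
      rw [dist_eq_norm]; congr 1; abel
    rw [Metric.mem_ball] at h1 ⊢
    rw [h2] at this; linarith
  by_contra hne
  have hcover : (⋃ n, s n) ⊆ Metric.ball x (r + 1) := Set.iUnion_subset hsub
  have hμU : volume (⋃ n, s n) = ∑' n, volume (s n) :=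
    measure_iUnion hdisj fun n => hGm.preimage (measurable_const_add _)
  have htop : (∑' n : ℕ, volume (s n)) = ⊤ := by
    simp_rw [hμs]
    exact ENNReal.tsum_const_eq_top_of_ne_zero hne
  have hfin : volume (Metric.ball x (r + 1)) < ⊤ := Metric.isBounded_ball.measure_lt_top
  have h2 : volume (⋃ n, s n) ≤ volume (Metric.ball x (r + 1)) := measure_mono hcover
  rw [hμU, htop] at h2
  exact hfin.ne (top_le_iff.mp h2)

lemma frontier_null {d : ℕ} {A : Set (Fin d → ℝ)} (h : LipschitzGraphBoundary A) :
    volume (frontier A) = 0 := by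
  refine measure_null_of_locally_null _ fun x hx => ?_
  obtain ⟨i, r, hr, L, φ, hφ, hiff⟩ := h x hx
  refine ⟨Metric.ball x r ∩ frontier A, ?_, ?_⟩
  · exact Filter.inter_mem (mem_nhdsWithin_of_mem_nhds (Metric.ball_mem_nhds x hr))
      self_mem_nhdsWithin
  · refine measure_mono_null ?_ (graph_null i φ hφ.continuous x r)
    rintro y ⟨hyb, hyf⟩
    refine ⟨hyb, ?_⟩
    by_contra hne
    have hcont : Continuous fun z : Fin d → ℝ => φ (Function.update z i 0) - z i :=
      (hφ.continuous.comp (continuous_id.update i continuous_const)).sub (continuous_apply i)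
    rcases lt_or_gt_of_ne hne with hlt | hgt
    · -- y i < φ (...) : y is in interior A
      have hWo : IsOpen (Metric.ball x r ∩ {z | z i < φ (Function.update z i 0)}) := by
        apply Metric.isOpen_ball.inter
        have : {z : Fin d → ℝ | z i < φ (Function.update z i 0)}
            = (fun z : Fin d → ℝ => φ (Function.update z i 0) - z i) ⁻¹' (Set.Ioi 0) := by
          ext z
          simp only [Set.mem_setOf_eq, Set.mem_preimage, Set.mem_Ioi, sub_pos]
        rw [this]; exact isOpen_Ioi.preimage hcont
      have hWA : (Metric.ball x r ∩ {z | z i < φ (Function.update z i 0)}) ⊆ A :=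
        fun z ⟨hz1, hz2⟩ => (hiff z hz1).mpr hz2
      have hyint : y ∈ interior A := interior_maximal hWA hWo ⟨hyb, hlt⟩
      rw [frontier_eq_closure_inter_closure, closure_compl] at hyf
      exact hyf.2 hyint
    · have hWo : IsOpen (Metric.ball x r ∩ {z | φ (Function.update z i 0) < z i}) := by
        apply Metric.isOpen_ball.inter
        have : {z : Fin d → ℝ | φ (Function.update z i 0) < z i}
            = (fun z : Fin d → ℝ => φ (Function.update z i 0) - z i) ⁻¹' (Set.Iio 0) := by
          ext z
          simp only [Set.mem_setOf_eq, Set.mem_preimage, Set.mem_Iio, sub_neg]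
        rw [this]; exact isOpen_Iio.preimage hcont
      have hWA : (Metric.ball x r ∩ {z | φ (Function.update z i 0) < z i}) ⊆ Aᶜ := by
        rintro z ⟨hz1, hz2⟩ hzA
        exact absurd ((hiff z hz1).mp hzA) (not_lt.mpr hz2.le)
      have hyint : y ∈ interior Aᶜ := interior_maximal hWA hWo ⟨hyb, hgt⟩
      rw [interior_compl] at hyint
      exact hyint (frontier_subset_closure hyf)


lemma pd_zero_of_nmem {d : ℕ} (φ : (Fin d → ℝ) → ℝ) (j : Fin d) {x : Fin d → ℝ}
    (hx : x ∉ tsupport φ) : pd φ j x = 0 := by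
  rw [pd, (HasFDerivAt.of_notMem_tsupport ℝ hx).fderiv]
  rfl

lemma pd_cont {d : ℕ} {φ : (Fin d → ℝ) → ℝ} (hφ : ContDiff ℝ (⊤ : ℕ∞) φ) (j : Fin d) :
    Continuous (pd φ j) :=
  (hφ.continuous_fderiv_apply (by simp)).comp (continuous_id.prodMk continuous_const)

lemma pd_bound {d : ℕ} {φ : (Fin d → ℝ) → ℝ} (hφ : ContDiff ℝ (⊤ : ℕ∞) φ)
    (hφc : HasCompactSupport φ) (j : Fin d) : ∃ C, ∀ x, ‖pd φ j x‖ ≤ C := by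
  have h1 : HasCompactSupport (pd φ j) :=
    HasCompactSupport.intro hφc fun x hx => pd_zero_of_nmem φ j hx
  exact h1.exists_bound_of_continuous (pd_cont hφ j)

lemma pd_const_zero {d : ℕ} (j : Fin d) (x : Fin d → ℝ) :
    pd (fun _ => (0 : ℝ)) j x = 0 := by
  rw [pd, fderiv_fun_const]
  rfl

lemma integrable_mul_bdd {α : Type*} [TopologicalSpace α] [MeasurableSpace α]
    [OpensMeasurableSpace α] {μ : Measure α} [IsFiniteMeasure μ]
    {u : α → ℝ} (hu : MemLp u 2 μ) {g : α → ℝ}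
    (hg : Continuous g)
    (hb : ∃ C, ∀ x, ‖g x‖ ≤ C) :
    Integrable (fun x => u x * g x) μ := by
  have hint : Integrable u μ := hu.integrable one_le_two
  have h2 := hint.bdd_mul hg.aestronglyMeasurable (c := hb.choose) (ae_of_all _ hb.choose_spec)
  simpa [mul_comm] using h2

lemma restrict_eq_of_null {α : Type*} [MeasurableSpace α] {μ : Measure α} {s t N : Set α}
    (hts : t ⊆ s) (hsub : s ⊆ t ∪ N) (hN : μ N = 0) : μ.restrict s = μ.restrict t := by
  refine le_antisymm ?_ (Measure.restrict_mono hts le_rfl)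
  calc μ.restrict s ≤ μ.restrict (t ∪ N) := Measure.restrict_mono hsub le_rfl
    _ ≤ μ.restrict t + μ.restrict N := Measure.restrict_union_le _ _
    _ = μ.restrict t := by rw [Measure.restrict_eq_zero.mpr hN, add_zero]


lemma isWeakGrad_sub {d : ℕ} {Uo O : Set (Fin d → ℝ)} {f : (Fin d → ℝ) → Fin d → ℝ}
    {G : (Fin d → ℝ) → Fin d → Fin d → ℝ}
    (hwg : IsWeakGrad Uo f G) (hO : O ⊆ Uo) : IsWeakGrad O f G := by
  intro φ hφ hφc hφs i j
  have hsU : tsupport φ ⊆ Uo := hφs.trans hO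
  have h1 : ∀ x ∉ O, f x i * pd φ j x = 0 := fun x hx => by
    rw [pd_zero_of_nmem φ j fun h => hx (hφs h), mul_zero]
  have h1' : ∀ x ∉ Uo, f x i * pd φ j x = 0 := fun x hx => by
    rw [pd_zero_of_nmem φ j fun h => hx (hsU h), mul_zero]
  have h2 : ∀ x ∉ O, G x i j * φ x = 0 := fun x hx => by
    rw [image_eq_zero_of_notMem_tsupport fun h => hx (hφs h), mul_zero]
  have h2' : ∀ x ∉ Uo, G x i j * φ x = 0 := fun x hx => by
    rw [image_eq_zero_of_notMem_tsupport fun h => hx (hsU h), mul_zero]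
  rw [setIntegral_eq_integral_of_forall_compl_eq_zero h1,
    setIntegral_eq_integral_of_forall_compl_eq_zero h2,
    ← setIntegral_eq_integral_of_forall_compl_eq_zero h1',
    ← setIntegral_eq_integral_of_forall_compl_eq_zero h2']
  exact hwg φ hφ hφc hsU i j

/-- Let `Γ = ∂Ω⁻` be a closed Lipschitz surface splitting the bounded
Lipschitz domain `Ω` into `Ω⁺ = Ω \ closure Ω⁻` and `Ω⁻`, and `S ⊆ Γ` a relatively open
subsurface. Then `H¹(Ω\S̄; ℝ^d)` coincides with
`H̃ = {f ∈ L²(Ω) : f|_{Ω⁺} ∈ H¹(Ω⁺), f|_{Ω⁻} ∈ H¹(Ω⁻), [f]_{Γ\S̄} = 0}`, where the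
zero-jump condition across `Γ\S̄` is expressed weakly: the integration-by-parts defect
`∫_Γ [f] ψ·n` vanishes for all smooth test vector fields `ψ` supported in `Ω` away
from `S̄` (the two norms then agree, the piecewise gradient being the weak gradient). -/
theorem stmt_17 {d : ℕ} (Ω Ωneg : Set (Fin d → ℝ))
    (hΩo : IsOpen Ω) (hΩb : Bornology.IsBounded Ω) (hΩlip : LipschitzGraphBoundary Ω)
    (hΩnego : IsOpen Ωneg) (hΩnegΩ : closure Ωneg ⊆ Ω)
    (hΩneglip : LipschitzGraphBoundary Ωneg)
    (S : Set (Fin d → ℝ)) (V : Set (Fin d → ℝ)) (hV : IsOpen V)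
    (hS : S = frontier Ωneg ∩ V)
    (f : (Fin d → ℝ) → Fin d → ℝ) :
    MemH1 (Ω \ closure S) f ↔
      ((∀ i, MemLp (fun x => f x i) 2 (volume.restrict Ω)) ∧
        ∃ Gp Gm : (Fin d → ℝ) → Fin d → Fin d → ℝ,
          (∀ i j, MemLp (fun x => Gp x i j) 2 (volume.restrict (Ω \ closure Ωneg))) ∧
          (∀ i j, MemLp (fun x => Gm x i j) 2 (volume.restrict Ωneg)) ∧
          IsWeakGrad (Ω \ closure Ωneg) f Gp ∧
          IsWeakGrad Ωneg f Gm ∧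
          (∀ ψ : (Fin d → ℝ) → Fin d → ℝ,
            ContDiff ℝ (⊤ : ℕ∞) ψ → HasCompactSupport ψ → tsupport ψ ⊆ Ω →
            tsupport ψ ∩ closure S = ∅ →
            ∀ i,
              (∫ x in Ω \ closure Ωneg,
                (f x i * ∑ j, pd (fun y => ψ y j) j x + ∑ j, Gp x i j * ψ x j))
              + (∫ x in Ωneg,
                (f x i * ∑ j, pd (fun y => ψ y j) j x + ∑ j, Gm x i j * ψ x j)) = 0)) := by
  classical
  set U : Set (Fin d → ℝ) := Ω \ closure S with hU
  set A : Set (Fin d → ℝ) := Ω \ closure Ωneg with hA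
  have hN : volume (frontier Ωneg) = 0 := frontier_null hΩneglip
  have hScl : closure S ⊆ frontier Ωneg := by
    rw [hS]; exact closure_minimal Set.inter_subset_left isClosed_frontier
  have hNS : volume (closure S) = 0 := measure_mono_null hScl hN
  have hAΩ : A ⊆ Ω := Set.diff_subset
  have hUΩ : U ⊆ Ω := Set.diff_subset
  have hBΩ : Ωneg ⊆ Ω := fun x hx => hΩnegΩ (subset_closure hx)
  have hAU : A ⊆ U := fun x hx =>
    ⟨hx.1, fun hc => hx.2 (frontier_subset_closure (hScl hc))⟩
  have hBU : Ωneg ⊆ U := fun x hx =>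
    ⟨hBΩ hx, fun hc => ((hΩnego.frontier_eq ▸ hScl hc).2 hx)⟩
  have hABU : A ∪ Ωneg ⊆ U := Set.union_subset hAU hBU
  have hUsub : U ⊆ (A ∪ Ωneg) ∪ frontier Ωneg := by
    intro x hx
    by_cases hcl : x ∈ closure Ωneg
    · by_cases hB : x ∈ Ωneg
      · exact Or.inl (Or.inr hB)
      · exact Or.inr (hΩnego.frontier_eq ▸ ⟨hcl, hB⟩)
    · exact Or.inl (Or.inl ⟨hx.1, hcl⟩)
  have hdisjAB : Disjoint A Ωneg :=
    Set.disjoint_left.mpr fun x hx hB => hx.2 (subset_closure hB)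
  have hAmeas : MeasurableSet A := hΩo.measurableSet.diff isClosed_closure.measurableSet
  have hrU : volume.restrict U = volume.restrict (A ∪ Ωneg) :=
    restrict_eq_of_null hABU hUsub hN
  have hrΩ : volume.restrict Ω = volume.restrict U := by
    refine restrict_eq_of_null hUΩ (fun x hx => ?_) hNS
    by_cases hc : x ∈ closure S
    · exact Or.inr hc
    · exact Or.inl ⟨hx, hc⟩
  have hrsum : volume.restrict (A ∪ Ωneg) = volume.restrict A + volume.restrict Ωneg :=
    Measure.restrict_union hdisjAB hΩnego.measurableSet
  have hfinm : ∀ s : Set (Fin d → ℝ), s ⊆ Ω → IsFiniteMeasure (volume.restrict s) := by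
    intro s hs
    constructor
    rw [Measure.restrict_apply_univ]
    exact (hΩb.subset hs).measure_lt_top
  haveI hfinU : IsFiniteMeasure (volume.restrict U) := hfinm U hUΩ
  haveI hfinA : IsFiniteMeasure (volume.restrict A) := hfinm A hAΩ
  haveI hfinB : IsFiniteMeasure (volume.restrict Ωneg) := hfinm Ωneg hBΩ
  haveI hfinΩ : IsFiniteMeasure (volume.restrict Ω) := hfinm Ω le_rfl
  constructor
  · rintro ⟨hf2, G, hG2, hwg⟩
    refine ⟨fun i => by rw [hrΩ]; exact hf2 i, G, G,
      fun i j => (hG2 i j).mono_measure (Measure.restrict_mono hAU le_rfl),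
      fun i j => (hG2 i j).mono_measure (Measure.restrict_mono hBU le_rfl),
      isWeakGrad_sub hwg hAU, isWeakGrad_sub hwg hBU, ?_⟩
    intro ψ hψ hψc hψs hψS i
    have hts : tsupport ψ ⊆ U := fun x hx =>
      ⟨hψs hx, fun hc => Set.eq_empty_iff_forall_notMem.mp hψS x ⟨hx, hc⟩⟩
    have hφ : ∀ j : Fin d, ContDiff ℝ (⊤ : ℕ∞) fun x => ψ x j :=
      fun j => (contDiff_apply ℝ ℝ j).comp hψ
    have hφc : ∀ j : Fin d, HasCompactSupport fun x => ψ x j :=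
      fun j => hψc.comp_left (g := fun v : Fin d → ℝ => v j) rfl
    have hφs : ∀ j : Fin d, tsupport (fun x => ψ x j) ⊆ tsupport ψ := fun j =>
      closure_mono fun x hx h0 => hx (by simp [h0])
    have eqj : ∀ j, ∫ x in U, f x i * pd (fun y => ψ y j) j x
        = - ∫ x in U, G x i j * ψ x j :=
      fun j => hwg _ (hφ j) (hφc j) ((hφs j).trans hts) i j
    have Ifj : ∀ j, Integrable (fun x => f x i * pd (fun y => ψ y j) j x)
        (volume.restrict U) :=
      fun j => integrable_mul_bdd (hf2 i) (pd_cont (hφ j) j) (pd_bound (hφ j) (hφc j) j)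
    have IGj : ∀ j, Integrable (fun x => G x i j * ψ x j) (volume.restrict U) :=
      fun j => integrable_mul_bdd (hG2 i j) (hφ j).continuous
        ((hφc j).exists_bound_of_continuous (hφ j).continuous)
    have IY : Integrable (fun x =>
        (∑ j, f x i * pd (fun y => ψ y j) j x) + ∑ j, G x i j * ψ x j)
        (volume.restrict U) :=
      (integrable_finset_sum _ fun j _ => Ifj j).add (integrable_finset_sum _ fun j _ => IGj j)
    have key : ∫ x in U,
        ((∑ j, f x i * pd (fun y => ψ y j) j x) + ∑ j, G x i j * ψ x j) = 0 := by
      rw [integral_add (integrable_finset_sum _ fun j _ => Ifj j)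
        (integrable_finset_sum _ fun j _ => IGj j),
        integral_finset_sum _ (fun j _ => Ifj j), integral_finset_sum _ (fun j _ => IGj j)]
      simp_rw [eqj]
      rw [Finset.sum_neg_distrib]
      exact neg_add_cancel _
    have hsplit : ∫ x in U,
        ((∑ j, f x i * pd (fun y => ψ y j) j x) + ∑ j, G x i j * ψ x j)
        = (∫ x in A, ((∑ j, f x i * pd (fun y => ψ y j) j x) + ∑ j, G x i j * ψ x j))
          + ∫ x in Ωneg, ((∑ j, f x i * pd (fun y => ψ y j) j x) + ∑ j, G x i j * ψ x j) := by
      rw [hrU, hrsum]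
      exact integral_add_measure (IY.mono_measure (Measure.restrict_mono hAU le_rfl))
        (IY.mono_measure (Measure.restrict_mono hBU le_rfl))
    simp_rw [Finset.mul_sum]
    rw [← hsplit, key]
  · rintro ⟨hf2, Gp, Gm, hGp2, hGm2, hwgp, hwgm, hjump⟩
    have hf2U : ∀ i, MemLp (fun x => f x i) 2 (volume.restrict U) := by
      intro i; rw [← hrΩ]; exact hf2 i
    set G : (Fin d → ℝ) → Fin d → Fin d → ℝ :=
      fun x => if x ∈ Ωneg then Gm x else Gp x with hGdef
    refine ⟨hf2U, G, ?_, ?_⟩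
    · intro i j
      rw [hrU]
      have hGind : (fun x => A.indicator (fun y => Gp y i j) x
          + Ωneg.indicator (fun y => Gm y i j) x)
          =ᵐ[volume.restrict (A ∪ Ωneg)] (fun x => G x i j) := by
        refine (ae_restrict_iff' (hAmeas.union hΩnego.measurableSet)).mpr
          (Filter.Eventually.of_forall fun x hx => ?_)
        rcases hx with hxA | hxB
        · have hxn : x ∉ Ωneg := fun h => hxA.2 (subset_closure h)
          simp [hGdef, Set.indicator_of_mem hxA, Set.indicator_of_notMem hxn, hxn]
        · have hxA' : x ∉ A := fun h => h.2 (subset_closure hxB)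
          simp [hGdef, Set.indicator_of_notMem hxA', Set.indicator_of_mem hxB, hxB]
      refine MemLp.ae_eq hGind ?_
      apply MemLp.add
      · rw [memLp_indicator_iff_restrict hAmeas, Measure.restrict_restrict hAmeas,
          Set.inter_eq_self_of_subset_left Set.subset_union_left]
        exact hGp2 i j
      · rw [memLp_indicator_iff_restrict hΩnego.measurableSet,
          Measure.restrict_restrict hΩnego.measurableSet,
          Set.inter_eq_self_of_subset_left Set.subset_union_right]
        exact hGm2 i j
    · intro φ hφ hφc hφs i j
      set ψ : (Fin d → ℝ) → Fin d → ℝ := fun x => Pi.single j (φ x) with hψdef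
      have hψ : ContDiff ℝ (⊤ : ℕ∞) ψ := by
        rw [contDiff_pi]
        intro k
        by_cases hk : k = j
        · subst hk
          simpa only [hψdef, Pi.single_eq_same] using hφ
        · simp only [hψdef, Pi.single_eq_of_ne hk]
          exact contDiff_const
      have hψc : HasCompactSupport ψ :=
        hφc.comp_left (g := fun t : ℝ => (Pi.single j t : Fin d → ℝ)) (by simp)
      have hψts : tsupport ψ ⊆ tsupport φ :=
        closure_mono fun x hx h0 => hx (by simp [hψdef, h0])
      have hψs : tsupport ψ ⊆ Ω := hψts.trans (hφs.trans hUΩ)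
      have hψS : tsupport ψ ∩ closure S = ∅ :=
        Set.eq_empty_iff_forall_notMem.mpr fun x hx => (hφs (hψts hx.1)).2 hx.2
      have hj := hjump ψ hψ hψc hψs hψS i
      have hsum1 : ∀ x, (∑ k, pd (fun y => ψ y k) k x) = pd φ j x := by
        intro x
        rw [Finset.sum_eq_single j]
        · congr 1
          funext y
          simp [hψdef, Pi.single_eq_same]
        · intro k _ hk
          have hzero : (fun y => ψ y k) = fun _ => (0 : ℝ) := by
            funext y; simp [hψdef, Pi.single_eq_of_ne hk]
          rw [hzero, pd_const_zero]
        · simp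
      have hsum2 : ∀ (H : (Fin d → ℝ) → Fin d → Fin d → ℝ) x,
          (∑ k, H x i k * ψ x k) = H x i j * φ x := by
        intro H x
        rw [Finset.sum_eq_single j]
        · simp [hψdef, Pi.single_eq_same]
        · intro k _ hk
          simp [hψdef, Pi.single_eq_of_ne hk]
        · simp
      simp only [hsum1, hsum2] at hj
      have hbpd : ∃ C, ∀ x, ‖pd φ j x‖ ≤ C := pd_bound hφ hφc j
      have hbφ : ∃ C, ∀ x, ‖φ x‖ ≤ C := hφc.exists_bound_of_continuous hφ.continuous
      have IfA : Integrable (fun x => f x i * pd φ j x) (volume.restrict A) :=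
        integrable_mul_bdd ((hf2 i).mono_measure (Measure.restrict_mono hAΩ le_rfl))
          (pd_cont hφ j) hbpd
      have IfB : Integrable (fun x => f x i * pd φ j x) (volume.restrict Ωneg) :=
        integrable_mul_bdd ((hf2 i).mono_measure (Measure.restrict_mono hBΩ le_rfl))
          (pd_cont hφ j) hbpd
      have IGpA : Integrable (fun x => Gp x i j * φ x) (volume.restrict A) :=
        integrable_mul_bdd (hGp2 i j) hφ.continuous hbφ
      have IGmB : Integrable (fun x => Gm x i j * φ x) (volume.restrict Ωneg) :=
        integrable_mul_bdd (hGm2 i j) hφ.continuous hbφ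
      have hGA : (fun x => G x i j * φ x) =ᵐ[volume.restrict A]
          (fun x => Gp x i j * φ x) := by
        refine (ae_restrict_iff' hAmeas).mpr (Filter.Eventually.of_forall fun x hx => ?_)
        have hxn : x ∉ Ωneg := fun h => hx.2 (subset_closure h)
        simp [hGdef, hxn]
      have hGB : (fun x => G x i j * φ x) =ᵐ[volume.restrict Ωneg]
          (fun x => Gm x i j * φ x) := by
        refine (ae_restrict_iff' hΩnego.measurableSet).mpr
          (Filter.Eventually.of_forall fun x hx => ?_)
        simp [hGdef, hx]
      have hL : ∫ x in U, f x i * pd φ j x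
          = (∫ x in A, f x i * pd φ j x) + ∫ x in Ωneg, f x i * pd φ j x := by
        rw [hrU, hrsum]
        exact integral_add_measure IfA IfB
      have hR : ∫ x in U, G x i j * φ x
          = (∫ x in A, Gp x i j * φ x) + ∫ x in Ωneg, Gm x i j * φ x := by
        rw [hrU, hrsum,
          integral_add_measure (IGpA.congr hGA.symm) (IGmB.congr hGB.symm),
          integral_congr_ae hGA, integral_congr_ae hGB]
      have hjA : ∫ x in A, (f x i * pd φ j x + Gp x i j * φ x)
          = (∫ x in A, f x i * pd φ j x) + ∫ x in A, Gp x i j * φ x :=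
        integral_add IfA IGpA
      have hjB : ∫ x in Ωneg, (f x i * pd φ j x + Gm x i j * φ x)
          = (∫ x in Ωneg, f x i * pd φ j x) + ∫ x in Ωneg, Gm x i j * φ x :=
        integral_add IfB IGmB
      rw [hjA, hjB] at hj
      rw [hL, hR]
      linarith
end
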